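/- arXiv:1610.05178 — 6 statements merged into one kernel-verified Lean document; each statement's English description precedes it below -/
import Mathlib

section
/- Let k be a commutative ring, A and B associative (not necessarily unital) k-algebras, M a faithful left A-module and N a faithful left B-module. Suppose moreover that elements of M can be separated by k-module homomorphisms M → k (i.e., for every nonzero u ∈ M there is a k-linear map φ: M → k with φ(u) ≠ 0), and that every finite subset of B is contained in a free k-submodule of B. Then the left (A ⊗_k B)-module M ⊗_k N is faithful. -/
open TensorProduct

/-!
Contracting the first tensor factor of `f ∈ A ⊗ B` against the functionals `a ↦ φ (μ a u)`
(`φ : M → k`, `u ∈ M`) computes the action of `f` on `u ⊗ v` followed by `φ ⊗ id`; so if `f`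
acts as zero, each contraction acts as zero on `N` and therefore vanishes by faithfulness of `N`.
Faithfulness of `M` and the separation hypothesis say that these functionals separate the
points of `A`. Finally `f` lives in `A ⊗ S` for a free submodule `S ⊆ B`, where in a basis of `S`
it has coefficients in `A` that all these functionals kill, so they vanish.
-/

namespace TensorProduct

variable {k : Type*} [CommSemiring k] {A B S : Type*}
  [AddCommMonoid A] [Module k A] [AddCommMonoid B] [Module k B] [AddCommMonoid S] [Module k S]

theorem eq_zero_of_forall_rTensor_eq_zero_of_free [Module.Free k S] {I : Type*}
    (ψ : I → A →ₗ[k] k) (hψ : ∀ a : A, (∀ i, ψ i a = 0) → a = 0) (x : A ⊗[k] S)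
    (hx : ∀ i, (ψ i).rTensor S x = 0) : x = 0 := by
  classical
  let b := Module.Free.chooseBasis k S
  have hcoeff : ∀ (i : I) (j : Module.Free.ChooseBasisIndex k S) (y : A ⊗[k] S),
      ψ i (equivFinsuppOfBasisRight b y j) =
        TensorProduct.rid k k ((b.coord j).lTensor k ((ψ i).rTensor S y)) := by
    intro i j y
    rw [equivFinsuppOfBasisRight_apply]
    induction y <;> simp_all
  apply (equivFinsuppOfBasisRight b).injective
  ext j
  exact hψ _ fun i => by simp [hcoeff, hx]

theorem exists_free_submodule_mem_range_lTensor
    (hfree : ∀ s : Finset B, ∃ S : Submodule k B, (s : Set B) ⊆ S ∧ Module.Free k S)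
    (x : A ⊗[k] B) :
    ∃ S : Submodule k B, Module.Free k S ∧ x ∈ LinearMap.range (S.subtype.lTensor A) := by
  obtain ⟨N', hfin, hx⟩ := exists_finite_submodule_right_of_setFinite {x} (Set.finite_singleton x)
  obtain ⟨s, rfl⟩ := Module.Finite.iff_fg.mp hfin
  obtain ⟨S, hsS, hSfree⟩ := hfree s
  have hle : Submodule.span k (s : Set B) ≤ S := Submodule.span_le.mpr hsS
  refine ⟨S, hSfree, ?_⟩
  have hsub : (Submodule.span k (s : Set B)).subtype = S.subtype ∘ₗ Submodule.inclusion hle := rfl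
  rw [hsub, LinearMap.lTensor_comp] at hx
  exact LinearMap.range_comp_le_range _ _ (hx rfl)

theorem eq_zero_of_forall_rTensor_eq_zero_of_locallyFree
    (hfree : ∀ s : Finset B, ∃ S : Submodule k B, (s : Set B) ⊆ S ∧ Module.Free k S) {I : Type*}
    (ψ : I → A →ₗ[k] k) (hψ : ∀ a : A, (∀ i, ψ i a = 0) → a = 0) (x : A ⊗[k] B)
    (hx : ∀ i, (ψ i).rTensor B x = 0) : x = 0 := by
  obtain ⟨S, hS, y, rfl⟩ := exists_free_submodule_mem_range_lTensor hfree x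
  have hinj : Function.Injective (S.subtype.lTensor k) :=
    Module.Flat.lTensor_preserves_injective_linearMap _ S.injective_subtype
  suffices y = 0 by rw [this, map_zero]
  refine eq_zero_of_forall_rTensor_eq_zero_of_free ψ hψ y fun i => hinj ?_
  rw [← LinearMap.comp_apply, LinearMap.lTensor_comp_rTensor, ← LinearMap.rTensor_comp_lTensor,
    LinearMap.comp_apply]
  exact hx i

theorem lid_rTensor_homTensorHomMap_map_tmul {M N : Type*}
    [AddCommMonoid M] [Module k M] [AddCommMonoid N] [Module k N]
    (μ : A →ₗ[k] Module.End k M) (ν : B →ₗ[k] Module.End k N) (φ : M →ₗ[k] k) (u : M) (v : N)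
    (f : A ⊗[k] B) :
    TensorProduct.lid k N (φ.rTensor N (homTensorHomMap (RingHom.id k) M N M N (map μ ν f)
      (u ⊗ₜ v))) = ν (TensorProduct.lid k B ((φ ∘ₗ μ.flip u).rTensor B f)) v := by
  induction f with
  | zero => simp
  | tmul a b => simp
  | add x y hx hy => simp [hx, hy]

end TensorProduct

theorem faithful_tensor_faithful_of_commRing_general
    (k : Type*) [CommRing k] (A B M N : Type*)
    [NonUnitalRing A] [Module k A]
    [NonUnitalRing B] [Module k B]
    [AddCommGroup M] [Module k M] [AddCommGroup N] [Module k N]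
    (μ : A →ₗ[k] Module.End k M) (ν : B →ₗ[k] Module.End k N)
    (hM : Function.Injective μ) (hN : Function.Injective ν)
    (hsep : ∀ u : M, u ≠ 0 → ∃ φ : M →ₗ[k] k, φ u ≠ 0)
    (hfree : ∀ s : Finset B, ∃ S : Submodule k B, (s : Set B) ⊆ S ∧ Module.Free k S) :
    Function.Injective
      ((TensorProduct.homTensorHomMap (RingHom.id k) M N M N).comp (TensorProduct.map μ ν)) := by
  rw [injective_iff_map_eq_zero]
  intro f hf
  rw [LinearMap.comp_apply] at hf
  have hAsep : ∀ a : A, (∀ p : (M →ₗ[k] k) × M, (p.1 ∘ₗ μ.flip p.2) a = 0) → a = 0 := by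
    intro a ha
    apply hM
    rw [map_zero]
    refine LinearMap.ext fun u => ?_
    by_contra hu
    obtain ⟨φ, hφ⟩ := hsep _ hu
    exact hφ (ha (φ, u))
  refine eq_zero_of_forall_rTensor_eq_zero_of_locallyFree hfree _ hAsep f fun ⟨φ, u⟩ => ?_
  apply (TensorProduct.lid k B).injective
  refine hN (LinearMap.ext fun v => ?_)
  simpa [hf] using (lid_rTensor_homTensorHomMap_map_tmul μ ν φ u v f).symm

/-- **Corollary (to the proof of the main theorem).**
Let `k` be a commutative ring, `A` and `B` associative (not necessarily unital) `k`-algebras,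
`M` a faithful left `A`-module and `N` a faithful left `B`-module (module structures encoded
by multiplicative `k`-linear action maps into `Module.End k _`, faithfulness = injectivity).
Suppose moreover that elements of `M` are separated by `k`-module homomorphisms `M → k`,
and that every finite subset of `B` is contained in a free `k`-submodule of `B`.
Then the left `(A ⊗[k] B)`-module `M ⊗[k] N` is faithful, i.e. its action map
`(homTensorHomMap k M N M N) ∘ₗ (map μ ν)` is injective. -/
theorem faithful_tensor_faithful_of_commRing
    (k : Type*) [CommRing k] (A B M N : Type*)
    [NonUnitalRing A] [Module k A] [SMulCommClass k A A] [IsScalarTower k A A]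
    [NonUnitalRing B] [Module k B] [SMulCommClass k B B] [IsScalarTower k B B]
    [AddCommGroup M] [Module k M] [AddCommGroup N] [Module k N]
    (μ : A →ₗ[k] Module.End k M) (ν : B →ₗ[k] Module.End k N)
    (hμ : ∀ a a' : A, μ (a * a') = μ a * μ a')
    (hν : ∀ b b' : B, ν (b * b') = ν b * ν b')
    (hM : Function.Injective μ) (hN : Function.Injective ν)
    (hsep : ∀ u : M, u ≠ 0 → ∃ φ : M →ₗ[k] k, φ u ≠ 0)
    (hfree : ∀ s : Finset B, ∃ S : Submodule k B, (s : Set B) ⊆ S ∧ Module.Free k S) :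
    Function.Injective
      ((TensorProduct.homTensorHomMap (RingHom.id k) M N M N).comp (TensorProduct.map μ ν)) :=
  faithful_tensor_faithful_of_commRing_general k A B M N μ ν hM hN hsep hfree
end

section
/- Let C be a commutative principal ideal domain with infinitely many nonzero prime ideals, and let P_0, P_1 be two disjoint infinite sets of nonzero prime ideals of C. Take k = A = B = C, M = ⊕_{p ∈ P_0} C/p and N = ⊕_{p ∈ P_1} C/p. Then M is a faithful A-module, N is a faithful B-module, A ⊗_k B is nonzero, but M ⊗_k N = 0; in particular M ⊗_k N is not a faithful (A ⊗_k B)-module. (This gives a counterexample to the conclusion of the tensor-product faithfulness theorem when the base ring k is not a field, even though every finite subset of A and of B trivially lies in a free k-submodule.) -/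
/-!
Every element of `C ⧸ p` is killed by `p`, so `(C ⧸ p) ⊗ (C ⧸ q)` is killed by `p ⊔ q`, which is
all of `C` when `p ≠ q` are nonzero primes (hence distinct maximal ideals). Since the tensor
product distributes over direct sums and `P₀ ∩ P₁ = ∅`, `M ⊗ N = 0`. On the other hand the
annihilator of `M` is `⨅ p ∈ P₀, p`, which is `0` because a nonzero element of a Dedekind
domain lies in only finitely many nonzero primes; so `M` (and likewise `N`) is faithful, while
`C ⊗[C] C ≅ C ≠ 0` cannot act faithfully on the zero module.
-/

open DirectSum TensorProduct

namespace Module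

variable {R M N : Type*} [CommSemiring R] [AddCommMonoid M] [Module R M] [AddCommMonoid N]
  [Module R N]

theorem annihilator_le_annihilator_tensorProduct_left :
    annihilator R M ≤ annihilator R (M ⊗[R] N) := by
  intro r hr
  rw [mem_annihilator] at hr ⊢
  intro x
  induction x using TensorProduct.induction_on with
  | zero => exact smul_zero r
  | tmul m n => rw [smul_tmul', hr, zero_tmul]
  | add x y hx hy => rw [smul_add, hx, hy, add_zero]

theorem annihilator_le_annihilator_tensorProduct_right :
    annihilator R N ≤ annihilator R (M ⊗[R] N) :=
  annihilator_le_annihilator_tensorProduct_left.trans_eq (TensorProduct.comm R N M).annihilator_eq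

theorem subsingleton_tensorProduct_of_annihilator_sup_eq_top
    (h : annihilator R M ⊔ annihilator R N = ⊤) : Subsingleton (M ⊗[R] N) :=
  annihilator_eq_top_iff.mp <| top_le_iff.mp <| h ▸
    sup_le annihilator_le_annihilator_tensorProduct_left
      annihilator_le_annihilator_tensorProduct_right

end Module

theorem Ideal.subsingleton_quotient_tensor_quotient {R : Type*} [CommRing R] {I J : Ideal R}
    (h : I ⊔ J = ⊤) : Subsingleton ((R ⧸ I) ⊗[R] (R ⧸ J)) :=
  Module.subsingleton_tensorProduct_of_annihilator_sup_eq_top <| by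
    rwa [Ideal.annihilator_quotient, Ideal.annihilator_quotient]

theorem TensorProduct.subsingleton_directSum_tensor_directSum {R ι κ : Type*} [CommSemiring R]
    (M : ι → Type*) (N : κ → Type*) [∀ i, AddCommMonoid (M i)] [∀ i, Module R (M i)]
    [∀ j, AddCommMonoid (N j)] [∀ j, Module R (N j)] [∀ i j, Subsingleton (M i ⊗[R] N j)] :
    Subsingleton ((⨁ i, M i) ⊗[R] (⨁ j, N j)) := by
  classical
  exact (TensorProduct.directSum R R M N).toEquiv.subsingleton

namespace IsDedekindDomain

variable {R : Type*} [CommRing R] [IsDedekindDomain R]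

theorem setOf_isPrime_ne_bot_mem_finite {c : R} (hc : c ≠ 0) :
    {p : Ideal R | p.IsPrime ∧ p ≠ ⊥ ∧ c ∈ p}.Finite := by
  refine ((Ideal.finite_factors (I := Ideal.span {c}) (by simpa)).image
    HeightOneSpectrum.asIdeal).subset ?_
  rintro p ⟨hp, hne, hcp⟩
  exact ⟨⟨p, hp, hne⟩, Ideal.dvd_iff_le.mpr ((Ideal.span_singleton_le_iff_mem _).mpr hcp), rfl⟩

theorem iInf_eq_bot_of_infinite {P : Set (Ideal R)} (hP : P.Infinite)
    (hprime : ∀ p ∈ P, p.IsPrime) (hne : ∀ p ∈ P, p ≠ ⊥) : ⨅ p : P, (p : Ideal R) = ⊥ := by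
  refine eq_bot_iff.mpr fun c hc ↦ (Submodule.mem_bot R).mpr ?_
  by_contra hc0
  exact hP <| (setOf_isPrime_ne_bot_mem_finite hc0).subset fun p hp ↦
    ⟨hprime p hp, hne p hp, Submodule.mem_iInf _ |>.mp hc ⟨p, hp⟩⟩

theorem faithfulSMul_directSum_quotient {P : Set (Ideal R)} (hP : P.Infinite)
    (hprime : ∀ p ∈ P, p.IsPrime) (hne : ∀ p ∈ P, p ≠ ⊥) :
    FaithfulSMul R (⨁ p : P, R ⧸ (p : Ideal R)) := by
  refine (Module.annihilator_eq_bot (M := ⨁ p : P, R ⧸ (p : Ideal R))).mp ?_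
  calc Module.annihilator R (⨁ p : P, R ⧸ (p : Ideal R))
      = ⨅ p : P, Module.annihilator R (R ⧸ (p : Ideal R)) := Module.annihilator_dfinsupp
    _ = ⨅ p : P, (p : Ideal R) := by simp_rw [Ideal.annihilator_quotient]
    _ = ⊥ := iInf_eq_bot_of_infinite hP hprime hne

theorem sup_eq_top_of_isPrime_of_ne {p q : Ideal R} [p.IsPrime] [q.IsPrime] (hp : p ≠ ⊥)
    (hq : q ≠ ⊥) (hpq : p ≠ q) : p ⊔ q = ⊤ :=
  (Ideal.IsPrime.isMaximal ‹_› hp).coprime_of_ne (Ideal.IsPrime.isMaximal ‹_› hq) hpq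

theorem subsingleton_directSum_quotient_tensor_directSum_quotient {P₀ P₁ : Set (Ideal R)}
    (hd : Disjoint P₀ P₁) (hprime₀ : ∀ p ∈ P₀, p.IsPrime) (hne₀ : ∀ p ∈ P₀, p ≠ ⊥)
    (hprime₁ : ∀ p ∈ P₁, p.IsPrime) (hne₁ : ∀ p ∈ P₁, p ≠ ⊥) :
    Subsingleton ((⨁ p : P₀, R ⧸ (p : Ideal R)) ⊗[R] (⨁ q : P₁, R ⧸ (q : Ideal R))) := by
  have (p : P₀) (q : P₁) : Subsingleton ((R ⧸ (p : Ideal R)) ⊗[R] (R ⧸ (q : Ideal R))) := by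
    have := hprime₀ p p.2
    have := hprime₁ q q.2
    refine Ideal.subsingleton_quotient_tensor_quotient <|
      sup_eq_top_of_isPrime_of_ne (hne₀ p p.2) (hne₁ q q.2) fun hpq ↦ ?_
    exact Set.disjoint_left.mp hd p.2 (hpq ▸ q.2)
  exact TensorProduct.subsingleton_directSum_tensor_directSum _ _

end IsDedekindDomain

/-- **Counterexample (i).**  Let `C` be a commutative principal ideal domain with
infinitely many nonzero prime ideals and `P₀`, `P₁` two disjoint infinite sets of nonzero
prime ideals.  With `k = A = B = C`, `M = ⨁_{p ∈ P₀} C/p` and `N = ⨁_{p ∈ P₁} C/p`: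
`M` is a faithful `A`-module, `N` is a faithful `B`-module, `A ⊗[k] B = C ⊗[C] C` is
nonzero, but `M ⊗[k] N = 0`; in particular the action map of `A ⊗[k] B` on `M ⊗[k] N`
(sending `a ⊗ b` to the endomorphism `u ⊗ v ↦ (a • u) ⊗ (b • v)`) is not injective,
so `M ⊗[k] N` is not a faithful `(A ⊗[k] B)`-module. -/
theorem counterexample_directSum_quotients
    (C : Type*) [CommRing C] [IsDomain C] [IsPrincipalIdealRing C]
    (P₀ P₁ : Set (Ideal C)) (h₀ : P₀.Infinite) (h₁ : P₁.Infinite) (hd : Disjoint P₀ P₁)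
    (hprime₀ : ∀ p ∈ P₀, p.IsPrime) (hne₀ : ∀ p ∈ P₀, p ≠ ⊥)
    (hprime₁ : ∀ p ∈ P₁, p.IsPrime) (hne₁ : ∀ p ∈ P₁, p ≠ ⊥) :
    FaithfulSMul C (⨁ p : P₀, C ⧸ (p : Ideal C)) ∧
    FaithfulSMul C (⨁ p : P₁, C ⧸ (p : Ideal C)) ∧
    Nontrivial (C ⊗[C] C) ∧
    Subsingleton ((⨁ p : P₀, C ⧸ (p : Ideal C)) ⊗[C] (⨁ p : P₁, C ⧸ (p : Ideal C))) ∧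
    ¬ Function.Injective
      ((TensorProduct.homTensorHomMap (RingHom.id C)
          (⨁ p : P₀, C ⧸ (p : Ideal C)) (⨁ p : P₁, C ⧸ (p : Ideal C))
          (⨁ p : P₀, C ⧸ (p : Ideal C)) (⨁ p : P₁, C ⧸ (p : Ideal C))).comp
        (TensorProduct.map
          (LinearMap.lsmul C (⨁ p : P₀, C ⧸ (p : Ideal C)))
          (LinearMap.lsmul C (⨁ p : P₁, C ⧸ (p : Ideal C))))) := by
  have hAB : Nontrivial (C ⊗[C] C) := (TensorProduct.lid C C).toEquiv.nontrivial
  have hMN := IsDedekindDomain.subsingleton_directSum_quotient_tensor_directSum_quotient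
    hd hprime₀ hne₀ hprime₁ hne₁
  refine ⟨IsDedekindDomain.faithfulSMul_directSum_quotient h₀ hprime₀ hne₀,
    IsDedekindDomain.faithfulSMul_directSum_quotient h₁ hprime₁ hne₁, hAB, hMN, ?_⟩
  exact fun hinj ↦ not_subsingleton (C ⊗[C] C) hinj.subsingleton
end

section
/- Let C be a commutative principal ideal domain with infinitely many nonzero prime ideals, and let P_0, P_1 be two disjoint infinite sets of nonzero prime ideals of C. Let C⁺ be the commutative C-algebra obtained from the polynomial ring over C in indeterminates y_p, one for each p ∈ P_0 ∪ P_1, by imposing the relations c·y_p = 0 for every c ∈ p and every p ∈ P_0 ∪ P_1. Set k = C⁺, let M be the ideal of k generated by {y_p : p ∈ P_0}, N the ideal of k generated by {y_p : p ∈ P_1}, A = k/N and B = k/M. Then M·N = 0, so M is a left A-module and N a left B-module; M is faithful over A, N is faithful over B, A ⊗_k B ≅ k/(M + N) ≅ C is nonzero, but M ⊗_k N = 0, hence M ⊗_k N is not a faithful (A ⊗_k B)-module. (Here k-module homomorphisms into k separate the elements of M and of N, since M and N embed in k.) -/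
open TensorProduct

/-- The ideal of relations `c • y_p = 0` (for `c ∈ p`, `p ∈ P₀ ∪ P₁`) in the polynomial
ring over `C` in indeterminates `y_p`, `p ∈ P₀ ∪ P₁`. -/
noncomputable def CPlusRel (C : Type*) [CommRing C] (P₀ P₁ : Set (Ideal C)) :
    Ideal (MvPolynomial (↥(P₀ ∪ P₁)) C) :=
  Ideal.span { f | ∃ (p : ↥(P₀ ∪ P₁)) (c : C), c ∈ (p : Ideal C) ∧
    f = MvPolynomial.C c * MvPolynomial.X p }

/-- The commutative `C`-algebra `k = C⁺`, obtained from the polynomial ring over `C` in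
indeterminates `y_p` (`p ∈ P₀ ∪ P₁`) by imposing the relations `c·y_p = 0` for `c ∈ p`. -/
abbrev CPlus (C : Type*) [CommRing C] (P₀ P₁ : Set (Ideal C)) : Type _ :=
  MvPolynomial (↥(P₀ ∪ P₁)) C ⧸ CPlusRel C P₀ P₁

/-- The ideal `M` of `k` generated by the `y_p` with `p ∈ P₀`. -/
noncomputable def MIdeal (C : Type*) [CommRing C] (P₀ P₁ : Set (Ideal C)) : Ideal (CPlus C P₀ P₁) :=
  Ideal.span { x | ∃ p : ↥(P₀ ∪ P₁), (p : Ideal C) ∈ P₀ ∧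
    x = Ideal.Quotient.mk (CPlusRel C P₀ P₁) (MvPolynomial.X p) }

/-- The ideal `N` of `k` generated by the `y_p` with `p ∈ P₁`. -/
noncomputable def NIdeal (C : Type*) [CommRing C] (P₀ P₁ : Set (Ideal C)) : Ideal (CPlus C P₀ P₁) :=
  Ideal.span { x | ∃ p : ↥(P₀ ∪ P₁), (p : Ideal C) ∈ P₁ ∧
    x = Ideal.Quotient.mk (CPlusRel C P₀ P₁) (MvPolynomial.X p) }

/-
Distinct nonzero primes of a Dedekind domain are comaximal: for `p ≠ q` write `1 = a + b` with
`a ∈ p`, `b ∈ q`. Then `a y_p = 0 = b y_q` in `k`, which kills `y_p y_q` in `k` and `y_p ⊗ y_q`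
in `M ⊗[k] N`; so `M N = 0`, `M ⊗[k] N = 0`, and every monomial in two different variables
vanishes in `k`. If `x y_p = 0`, setting the other variables to `0` and reducing modulo `p` shows
that the coefficients of `x` at the pure powers `y_p^n` lie in `p`. When this holds for every `p`
in the infinite set `P₀`, the constant term of `x` lies in infinitely many nonzero primes, hence
is `0`, and the terms `c y_p^n` with `p ∈ P₀` vanish, so only powers of the `y_q`, `q ∈ P₁`,
remain: `x ∈ N`. Finally `A ⊗[k] B ≅ k ⧸ (M + N) ≅ C[y] ⧸ (y) ≅ C`, which is nonzero.
-/

namespace TensorProduct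

variable {R M N : Type*} [CommSemiring R] [AddCommMonoid M] [Module R M] [AddCommMonoid N]
  [Module R N]

theorem tmul_eq_zero_of_add_eq_one {a b : R} {m : M} {n : N} (hab : a + b = 1)
    (ha : a • m = 0) (hb : b • n = 0) : m ⊗ₜ[R] n = 0 :=
  calc m ⊗ₜ[R] n = (a + b) • m ⊗ₜ[R] n := by rw [hab, one_smul]
    _ = (a • m) ⊗ₜ[R] n + m ⊗ₜ[R] (b • n) := by rw [add_smul, smul_tmul', tmul_smul]
    _ = 0 := by rw [ha, hb, zero_tmul, tmul_zero, add_zero]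

theorem subsingleton_of_tmul_eq_zero {s : Set M} {t : Set N} (hs : Submodule.span R s = ⊤)
    (ht : Submodule.span R t = ⊤) (h : ∀ m ∈ s, ∀ n ∈ t, m ⊗ₜ[R] n = 0) :
    Subsingleton (M ⊗[R] N) := by
  have hmk : TensorProduct.mk R M N = 0 :=
    LinearMap.ext_on hs fun m hm => LinearMap.ext_on ht fun n hn => h m hm n hn
  have hid : (LinearMap.id : M ⊗[R] N →ₗ[R] M ⊗[R] N) = 0 :=
    TensorProduct.ext' fun m n => by simpa using LinearMap.congr_fun₂ hmk m n
  exact subsingleton_of_forall_eq 0 fun z => by simpa using LinearMap.congr_fun hid z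

end TensorProduct

namespace Ideal

variable {R : Type*} [CommRing R]

noncomputable def quotientTensorQuotientEquiv (I J : Ideal R) :
    (R ⧸ I) ⊗[R] (R ⧸ J) ≃+* R ⧸ (J ⊔ I) :=
  (Algebra.TensorProduct.quotIdealMapEquivQuotTensor (R ⧸ J) I).symm.toRingEquiv.trans
    (DoubleQuot.quotQuotEquivQuotSup J I)

theorem nontrivial_quotient_tensor_quotient (I J : Ideal R) [Nontrivial (R ⧸ (J ⊔ I))] :
    Nontrivial ((R ⧸ I) ⊗[R] (R ⧸ J)) :=
  (quotientTensorQuotientEquiv I J).toEquiv.nontrivial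

theorem pairwise_isCoprime_of_isPrime [Ring.DimensionLEOne R] {S : Set (Ideal R)}
    (hprime : ∀ P ∈ S, P.IsPrime) (hne : ∀ P ∈ S, P ≠ ⊥) :
    Pairwise fun P Q : ↥S => IsCoprime (P : Ideal R) Q := by
  intro P Q hPQ
  have := (hprime P P.2).isMaximal (hne P P.2)
  have := (hprime Q Q.2).isMaximal (hne Q Q.2)
  exact isCoprime_of_isMaximal (Subtype.coe_injective.ne hPQ)

end Ideal

theorem eq_zero_of_forall_mem_of_infinite {R : Type*} [CommRing R] [IsDedekindDomain R]
    {S : Set (Ideal R)} (hS : S.Infinite) (hprime : ∀ P ∈ S, P.IsPrime) (hne : ∀ P ∈ S, P ≠ ⊥)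
    {c : R} (hc : ∀ P ∈ S, c ∈ P) : c = 0 := by
  by_contra hc0
  have hfin := Ideal.finite_factors (I := Ideal.span {c}) (by simpa using hc0)
  refine hS ((hfin.image IsDedekindDomain.HeightOneSpectrum.asIdeal).subset fun P hP => ?_)
  exact ⟨⟨P, hprime P hP, hne P hP⟩,
    Ideal.dvd_iff_le.mpr ((Ideal.span_singleton_le_iff_mem P).mpr (hc P hP)), rfl⟩

namespace MvPolynomial

variable {σ R : Type*}

section CommSemiring

variable [CommSemiring R]

theorem ker_constantCoeff : RingHom.ker (constantCoeff (σ := σ) (R := R)) = idealOfVars σ R := by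
  ext f
  rw [← pow_one (idealOfVars σ R), mem_pow_idealOfVars_iff', RingHom.mem_ker]
  simp [constantCoeff, Finsupp.degree_eq_zero_iff]

theorem monomial_eq_C_mul_X_mul {m : σ →₀ ℕ} {i : σ} (hi : i ∈ m.support) (a : R) :
    monomial m a = C a * X i * monomial (m - Finsupp.single i 1) 1 := by
  have hle : Finsupp.single i 1 ≤ m := by
    simpa [Nat.one_le_iff_ne_zero] using hi
  rw [C_mul_X_eq_monomial, monomial_mul, mul_one, add_tsub_cancel_of_le hle]

end CommSemiring

variable [CommRing R] [DecidableEq σ]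

noncomputable def axisRestrict (i : σ) (I : Ideal R) :
    MvPolynomial σ R →ₐ[R] Polynomial (R ⧸ I) :=
  aeval (Pi.single i Polynomial.X)

theorem coeff_axisRestrict (i : σ) (I : Ideal R) (f : MvPolynomial σ R) (n : ℕ) :
    (axisRestrict i I f).coeff n = Ideal.Quotient.mk I (f.coeff (Finsupp.single i n)) := by
  induction f using MvPolynomial.induction_on' with
  | add f g hf hg => rw [map_add, Polynomial.coeff_add, hf, hg, coeff_add, map_add]
  | monomial m a =>
    rw [axisRestrict, aeval_monomial, coeff_monomial]
    by_cases hm : m.support ⊆ {i}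
    · rw [Finsupp.support_subset_singleton.mp hm, Finsupp.prod_single_index (by simp),
        Pi.single_eq_same, Polynomial.algebraMap_apply, Ideal.Quotient.algebraMap_eq,
        Polynomial.coeff_C_mul_X_pow]
      simp only [(Finsupp.single_injective i).eq_iff, eq_comm (a := n)]
      split_ifs <;> simp
    · obtain ⟨j, hj, hji⟩ := Finset.not_subset.mp hm
      have hprod :
          m.prod (fun j e => (Pi.single i Polynomial.X : σ → Polynomial (R ⧸ I)) j ^ e) = 0 :=
        Finset.prod_eq_zero hj
          (by simp [Pi.single_eq_of_ne (Finset.notMem_singleton.mp hji),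
            Finsupp.mem_support_iff.mp hj])
      rw [hprod, mul_zero, Polynomial.coeff_zero, if_neg, map_zero]
      rintro rfl
      exact hm Finsupp.support_single_subset

end MvPolynomial
namespace CPlus

open MvPolynomial

variable {C : Type*} [CommRing C] {P₀ P₁ : Set (Ideal C)}

noncomputable def y (p : ↥(P₀ ∪ P₁)) : CPlus C P₀ P₁ :=
  Ideal.Quotient.mk _ (X p)

theorem mIdeal_eq : MIdeal C P₀ P₁ = Ideal.span (y '' {p | (p : Ideal C) ∈ P₀}) := by
  rw [MIdeal]
  congr 1
  ext x
  exact ⟨fun ⟨p, hp, hx⟩ => ⟨p, hp, hx.symm⟩, fun ⟨p, hp, hx⟩ => ⟨p, hp, hx.symm⟩⟩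

theorem nIdeal_eq : NIdeal C P₀ P₁ = Ideal.span (y '' {p | (p : Ideal C) ∈ P₁}) := by
  rw [NIdeal]
  congr 1
  ext x
  exact ⟨fun ⟨p, hp, hx⟩ => ⟨p, hp, hx.symm⟩, fun ⟨p, hp, hx⟩ => ⟨p, hp, hx.symm⟩⟩

theorem monomial_mem_cPlusRel {m : ↥(P₀ ∪ P₁) →₀ ℕ} {p : ↥(P₀ ∪ P₁)} (hp : p ∈ m.support)
    {c : C} (hc : c ∈ (p : Ideal C)) : monomial m c ∈ CPlusRel C P₀ P₁ := by
  rw [monomial_eq_C_mul_X_mul hp]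
  exact Ideal.mul_mem_right _ _ (Ideal.subset_span ⟨p, c, hc, rfl⟩)

theorem monomial_mem_cPlusRel_of_ne
    (hcomax : Pairwise fun p q : ↥(P₀ ∪ P₁) => IsCoprime (p : Ideal C) q)
    {m : ↥(P₀ ∪ P₁) →₀ ℕ} {p q : ↥(P₀ ∪ P₁)}
    (hp : p ∈ m.support) (hq : q ∈ m.support) (hpq : p ≠ q) (c : C) :
    monomial m c ∈ CPlusRel C P₀ P₁ := by
  obtain ⟨a, ha, b, hb, hab⟩ := Ideal.isCoprime_iff_exists.mp (hcomax hpq)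
  rw [← one_mul c, ← hab, add_mul, map_add]
  exact add_mem (monomial_mem_cPlusRel hp (Ideal.mul_mem_right c _ ha))
    (monomial_mem_cPlusRel hq (Ideal.mul_mem_right c _ hb))

theorem exists_add_eq_one_mul_y_eq_zero
    (hcomax : Pairwise fun p q : ↥(P₀ ∪ P₁) => IsCoprime (p : Ideal C) q)
    {p q : ↥(P₀ ∪ P₁)} (hpq : p ≠ q) :
    ∃ a b : CPlus C P₀ P₁, a + b = 1 ∧ a * y p = 0 ∧ b * y q = 0 := by
  obtain ⟨a, ha, b, hb, hab⟩ := Ideal.isCoprime_iff_exists.mp (hcomax hpq)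
  refine ⟨Ideal.Quotient.mk _ (MvPolynomial.C a), Ideal.Quotient.mk _ (MvPolynomial.C b),
    ?_, ?_, ?_⟩
  · rw [← map_add, ← map_add, hab, map_one, map_one]
  all_goals
    rw [y, ← map_mul, Ideal.Quotient.eq_zero_iff_mem]
    exact Ideal.subset_span ⟨_, _, ‹_›, rfl⟩

theorem y_mul_y_of_ne
    (hcomax : Pairwise fun p q : ↥(P₀ ∪ P₁) => IsCoprime (p : Ideal C) q)
    {p q : ↥(P₀ ∪ P₁)} (hpq : p ≠ q) : y p * y q = 0 := by
  obtain ⟨a, b, hab, ha, hb⟩ := exists_add_eq_one_mul_y_eq_zero hcomax hpq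
  linear_combination -(y p * y q) * hab + y q * ha + y p * hb

theorem cPlusRel_le_ker_axisRestrict [DecidableEq ↥(P₀ ∪ P₁)] (p : ↥(P₀ ∪ P₁)) :
    CPlusRel C P₀ P₁ ≤ RingHom.ker (axisRestrict p (p : Ideal C)) := by
  rw [CPlusRel, Ideal.span_le]
  rintro _ ⟨q, c, hc, rfl⟩
  rw [SetLike.mem_coe, RingHom.mem_ker, map_mul]
  by_cases hqp : q = p
  · subst hqp
    rw [axisRestrict, aeval_C, Polynomial.algebraMap_apply, Ideal.Quotient.algebraMap_eq,
      Ideal.Quotient.eq_zero_iff_mem.mpr hc, map_zero, zero_mul]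
  · rw [axisRestrict, aeval_X, Pi.single_eq_of_ne hqp, mul_zero]

theorem coeff_single_mem_of_mul_y_eq_zero {f : MvPolynomial ↥(P₀ ∪ P₁) C} {p : ↥(P₀ ∪ P₁)}
    (h : Ideal.Quotient.mk (CPlusRel C P₀ P₁) f * y p = 0) (n : ℕ) :
    f.coeff (Finsupp.single p n) ∈ (p : Ideal C) := by
  classical
  have hker := cPlusRel_le_ker_axisRestrict p
    (Ideal.Quotient.eq_zero_iff_mem.mp ((map_mul _ f (X p)).trans h))
  have hf : axisRestrict p (p : Ideal C) f = 0 := by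
    rwa [RingHom.mem_ker, map_mul, axisRestrict, aeval_X, Pi.single_eq_same,
      Polynomial.monic_X.mul_left_eq_zero_iff] at hker
  rw [← Ideal.Quotient.eq_zero_iff_mem, ← coeff_axisRestrict, hf, Polynomial.coeff_zero]

theorem mem_cPlusRel_sup_span_X
    (hcomax : Pairwise fun p q : ↥(P₀ ∪ P₁) => IsCoprime (p : Ideal C) q)
    {S : Set ↥(P₀ ∪ P₁)} {f : MvPolynomial ↥(P₀ ∪ P₁) C} (h0 : f.coeff 0 = 0)
    (hS : ∀ p ∈ S, ∀ n, f.coeff (Finsupp.single p n) ∈ (p : Ideal C)) :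
    f ∈ CPlusRel C P₀ P₁ ⊔ Ideal.span (X '' Sᶜ) := by
  rw [f.as_sum]
  refine Submodule.sum_mem _ fun m _ => ?_
  by_cases hm0 : m = 0
  · rw [hm0, h0, map_zero]
    exact zero_mem _
  obtain ⟨p, hp⟩ := Finsupp.support_nonempty_iff.mpr hm0
  by_cases hsingle : m.support ⊆ {p}
  · by_cases hpS : p ∈ S
    · refine Ideal.mem_sup_left (monomial_mem_cPlusRel hp ?_)
      rw [Finsupp.support_subset_singleton.mp hsingle]
      exact hS p hpS _
    · refine Ideal.mem_sup_right ?_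
      rw [monomial_eq_C_mul_X_mul hp, mul_comm (MvPolynomial.C _), mul_assoc]
      exact Ideal.mul_mem_right _ _ (Ideal.subset_span ⟨p, hpS, rfl⟩)
  · obtain ⟨q, hq, hqp⟩ := Finset.not_subset.mp hsingle
    exact Ideal.mem_sup_left
      (monomial_mem_cPlusRel_of_ne hcomax hq hp (Finset.notMem_singleton.mp hqp) _)

theorem mem_span_y_of_mul_y_eq_zero
    (hcomax : Pairwise fun p q : ↥(P₀ ∪ P₁) => IsCoprime (p : Ideal C) q)
    {S : Set ↥(P₀ ∪ P₁)} (hS : ∀ c : C, (∀ p ∈ S, c ∈ (p : Ideal C)) → c = 0)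
    {x : CPlus C P₀ P₁} (hx : ∀ p ∈ S, x * y p = 0) : x ∈ Ideal.span (y '' Sᶜ) := by
  obtain ⟨f, rfl⟩ := Ideal.Quotient.mk_surjective x
  have hcoeff p hp := coeff_single_mem_of_mul_y_eq_zero (hx p hp)
  have h0 : f.coeff 0 = 0 := hS _ fun p hp => by simpa using hcoeff p hp 0
  obtain ⟨g, hg, h, hh, rfl⟩ := Submodule.mem_sup.mp (mem_cPlusRel_sup_span_X hcomax h0 hcoeff)
  have hy : y '' Sᶜ = Ideal.Quotient.mk (CPlusRel C P₀ P₁) '' (X '' Sᶜ) :=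
    (Set.image_image (Ideal.Quotient.mk _) X Sᶜ).symm
  rw [map_add, Ideal.Quotient.eq_zero_iff_mem.mpr hg, zero_add, hy, ← Ideal.map_span]
  exact Ideal.mem_map_of_mem _ hh

theorem mem_span_y_of_mul_span_y_eq_zero
    (hcomax : Pairwise fun p q : ↥(P₀ ∪ P₁) => IsCoprime (p : Ideal C) q)
    {T U : Set (Ideal C)}
    (hTU : ∀ p : ↥(P₀ ∪ P₁), (p : Ideal C) ∈ T ∨ (p : Ideal C) ∈ U)
    (hT : ∀ c : C, (∀ p : ↥(P₀ ∪ P₁), (p : Ideal C) ∈ T → c ∈ (p : Ideal C)) → c = 0)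
    {x : CPlus C P₀ P₁} (hx : ∀ m ∈ Ideal.span (y '' {p | (p : Ideal C) ∈ T}), x * m = 0) :
    x ∈ Ideal.span (y '' {p | (p : Ideal C) ∈ U}) :=
  Ideal.span_mono (Set.image_mono fun p hp => (hTU p).resolve_left hp)
    (mem_span_y_of_mul_y_eq_zero hcomax hT fun p hp => hx _ (Ideal.subset_span ⟨p, hp, rfl⟩))

theorem mIdeal_mul_nIdeal
    (hcomax : Pairwise fun p q : ↥(P₀ ∪ P₁) => IsCoprime (p : Ideal C) q)
    (hd : Disjoint P₀ P₁) :
    MIdeal C P₀ P₁ * NIdeal C P₀ P₁ = ⊥ := by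
  rw [mIdeal_eq, nIdeal_eq, Ideal.span_mul_span', Ideal.span_eq_bot]
  rintro _ ⟨_, ⟨p, hp, rfl⟩, _, ⟨q, hq, rfl⟩, rfl⟩
  exact y_mul_y_of_ne hcomax fun h => hd.ne_of_mem hp hq (congrArg Subtype.val h)

theorem subsingleton_mIdeal_tensor_nIdeal
    (hcomax : Pairwise fun p q : ↥(P₀ ∪ P₁) => IsCoprime (p : Ideal C) q)
    (hd : Disjoint P₀ P₁) :
    Subsingleton (↥(MIdeal C P₀ P₁) ⊗[CPlus C P₀ P₁] ↥(NIdeal C P₀ P₁)) := by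
  rw [mIdeal_eq, nIdeal_eq]
  refine TensorProduct.subsingleton_of_tmul_eq_zero Submodule.span_span_coe_preimage
    Submodule.span_span_coe_preimage ?_
  rintro ⟨_, _⟩ ⟨p, hp, rfl⟩ ⟨_, _⟩ ⟨q, hq, rfl⟩
  obtain ⟨a, b, hab, ha, hb⟩ :=
    exists_add_eq_one_mul_y_eq_zero hcomax fun h => hd.ne_of_mem hp hq (congrArg Subtype.val h)
  exact TensorProduct.tmul_eq_zero_of_add_eq_one hab (Subtype.ext ha) (Subtype.ext hb)

theorem mIdeal_sup_nIdeal : MIdeal C P₀ P₁ ⊔ NIdeal C P₀ P₁ =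
    (idealOfVars _ C).map (Ideal.Quotient.mk (CPlusRel C P₀ P₁)) := by
  have hunion : {p : ↥(P₀ ∪ P₁) | (p : Ideal C) ∈ P₀} ∪ {p | (p : Ideal C) ∈ P₁} = Set.univ :=
    Set.eq_univ_of_forall fun p => p.2
  rw [mIdeal_eq, nIdeal_eq, ← Ideal.span_union, ← Set.image_union, hunion, Set.image_univ,
    idealOfVars, Ideal.map_span, ← Set.range_comp]
  rfl

theorem cPlusRel_le_idealOfVars : CPlusRel C P₀ P₁ ≤ idealOfVars _ C := by
  rw [CPlusRel, Ideal.span_le]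
  rintro _ ⟨p, c, -, rfl⟩
  exact Ideal.mul_mem_left _ _ (Ideal.subset_span ⟨p, rfl⟩)

noncomputable def quotientSupEquiv : (CPlus C P₀ P₁ ⧸ (MIdeal C P₀ P₁ ⊔ NIdeal C P₀ P₁)) ≃+* C :=
  (Ideal.quotEquivOfEq mIdeal_sup_nIdeal).trans <|
    (DoubleQuot.quotQuotEquivQuotOfLE cPlusRel_le_idealOfVars).trans <|
    (Ideal.quotEquivOfEq ker_constantCoeff.symm).trans <|
    RingHom.quotientKerEquivOfSurjective fun c => ⟨MvPolynomial.C c, constantCoeff_C _ c⟩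

end CPlus

/-- **Counterexample (ii).**  Let `C` be a commutative principal ideal domain with
infinitely many nonzero prime ideals, `P₀`, `P₁` two disjoint infinite sets of nonzero
prime ideals of `C`, `k = C⁺`, `M` the ideal of `k` generated by the `y_p` (`p ∈ P₀`),
`N` the ideal of `k` generated by the `y_p` (`p ∈ P₁`), `A = k/N` and `B = k/M`.  Then:
`M·N = 0` (so `M` is an `A`-module and `N` a `B`-module); `M` is faithful over `A`
(anything in `k` annihilating `M` lies in `N`); `N` is faithful over `B`;
`A ⊗[k] B ≅ k/(M + N) ≅ C` is nonzero; but `M ⊗[k] N = 0`, hence no `k`-linear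
action of `A ⊗[k] B` on `M ⊗[k] N` can be injective, i.e. `M ⊗[k] N` is not a
faithful `(A ⊗[k] B)`-module. -/
theorem counterexample_CPlus_ideals
    (C : Type*) [CommRing C] [IsDomain C] [IsPrincipalIdealRing C]
    (P₀ P₁ : Set (Ideal C)) (h₀ : P₀.Infinite) (h₁ : P₁.Infinite) (hd : Disjoint P₀ P₁)
    (hprime₀ : ∀ p ∈ P₀, p.IsPrime) (hne₀ : ∀ p ∈ P₀, p ≠ ⊥)
    (hprime₁ : ∀ p ∈ P₁, p.IsPrime) (hne₁ : ∀ p ∈ P₁, p ≠ ⊥) :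
    MIdeal C P₀ P₁ * NIdeal C P₀ P₁ = ⊥ ∧
    (∀ x : CPlus C P₀ P₁, (∀ m ∈ MIdeal C P₀ P₁, x * m = 0) → x ∈ NIdeal C P₀ P₁) ∧
    (∀ x : CPlus C P₀ P₁, (∀ n ∈ NIdeal C P₀ P₁, x * n = 0) → x ∈ MIdeal C P₀ P₁) ∧
    Nonempty
      (@RingEquiv ((CPlus C P₀ P₁ ⧸ NIdeal C P₀ P₁) ⊗[CPlus C P₀ P₁] (CPlus C P₀ P₁ ⧸ MIdeal C P₀ P₁))
        (CPlus C P₀ P₁ ⧸ (MIdeal C P₀ P₁ ⊔ NIdeal C P₀ P₁))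
        (Algebra.TensorProduct.instMul (R := CPlus C P₀ P₁) (A := CPlus C P₀ P₁ ⧸ NIdeal C P₀ P₁)
          (B := CPlus C P₀ P₁ ⧸ MIdeal C P₀ P₁)) _ _ _) ∧
    Nonempty ((CPlus C P₀ P₁ ⧸ (MIdeal C P₀ P₁ ⊔ NIdeal C P₀ P₁)) ≃+* C) ∧
    Nontrivial
      ((CPlus C P₀ P₁ ⧸ NIdeal C P₀ P₁) ⊗[CPlus C P₀ P₁] (CPlus C P₀ P₁ ⧸ MIdeal C P₀ P₁)) ∧
    Subsingleton ((↥(MIdeal C P₀ P₁)) ⊗[CPlus C P₀ P₁] (↥(NIdeal C P₀ P₁))) ∧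
    (∀ φ : ((CPlus C P₀ P₁ ⧸ NIdeal C P₀ P₁) ⊗[CPlus C P₀ P₁]
          (CPlus C P₀ P₁ ⧸ MIdeal C P₀ P₁)) →ₗ[CPlus C P₀ P₁]
        Module.End (CPlus C P₀ P₁)
          ((↥(MIdeal C P₀ P₁)) ⊗[CPlus C P₀ P₁] (↥(NIdeal C P₀ P₁))),
      ¬ Function.Injective φ) := by
  have hcomax := Ideal.pairwise_isCoprime_of_isPrime (S := P₀ ∪ P₁)
    (fun P hP => hP.elim (hprime₀ P) (hprime₁ P)) (fun P hP => hP.elim (hne₀ P) (hne₁ P))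
  have hP₀ (c : C) (hc : ∀ p : ↥(P₀ ∪ P₁), (p : Ideal C) ∈ P₀ → c ∈ (p : Ideal C)) : c = 0 :=
    eq_zero_of_forall_mem_of_infinite h₀ hprime₀ hne₀ fun P hP => hc ⟨P, .inl hP⟩ hP
  have hP₁ (c : C) (hc : ∀ p : ↥(P₀ ∪ P₁), (p : Ideal C) ∈ P₁ → c ∈ (p : Ideal C)) : c = 0 :=
    eq_zero_of_forall_mem_of_infinite h₁ hprime₁ hne₁ fun P hP => hc ⟨P, .inr hP⟩ hP
  have : Nontrivial (CPlus C P₀ P₁ ⧸ (MIdeal C P₀ P₁ ⊔ NIdeal C P₀ P₁)) :=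
    CPlus.quotientSupEquiv.toEquiv.nontrivial
  have hAB := Ideal.nontrivial_quotient_tensor_quotient (NIdeal C P₀ P₁) (MIdeal C P₀ P₁)
  have hMN := CPlus.subsingleton_mIdeal_tensor_nIdeal hcomax hd
  refine ⟨CPlus.mIdeal_mul_nIdeal hcomax hd, fun x hx => ?_, fun x hx => ?_,
    ⟨Ideal.quotientTensorQuotientEquiv _ _⟩, ⟨CPlus.quotientSupEquiv⟩, hAB, hMN,
    fun φ hφ => not_subsingleton _ hφ.subsingleton⟩
  · rw [CPlus.mIdeal_eq] at hx
    rw [CPlus.nIdeal_eq]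
    exact CPlus.mem_span_y_of_mul_span_y_eq_zero hcomax (fun p => p.2) hP₀ hx
  · rw [CPlus.nIdeal_eq] at hx
    rw [CPlus.mIdeal_eq]
    exact CPlus.mem_span_y_of_mul_span_y_eq_zero hcomax (fun p => p.2.symm) hP₁ hx
end

section
/- Let C be a commutative principal ideal domain having two non-associate prime elements p_0 and p_1. Let M = ⊕_{n ≥ 1} C/(p_0^n) and N = ⊕_{n ≥ 1} C/(p_1^n). Then M and N are faithful C-modules, but M ⊗_C N = 0. -/
open DirectSum TensorProduct

/-!
The annihilator of `⨁ₙ C/(pⁿ⁺¹)` is `⋂ₙ (pⁿ⁺¹)`, which vanishes by Krull's intersection theorem,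
so both modules are faithful. Every element of `M` is killed by a power of `p₀` and every element
of `N` by a power of `p₁`; since `p₀ᵃ` and `p₁ᵇ` are coprime, a Bézout relation
`u p₀ᵃ + v p₁ᵇ = 1` kills every pure tensor of `M ⊗ N`.
-/

theorem faithfulSMul_directSum_quotient_of_iInf_eq_bot {R ι : Type*} [CommRing R]
    (I : ι → Ideal R) (hI : ⨅ i, I i = ⊥) : FaithfulSMul R (⨁ i, R ⧸ I i) := by
  refine (Module.annihilator_eq_bot (R := R) (M := ⨁ i, R ⧸ I i)).mp ?_
  rw [← hI]
  exact Module.annihilator_dfinsupp.trans (by simp only [Ideal.annihilator_quotient])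

theorem iInf_span_singleton_pow_succ_eq_bot {R : Type*} [CommRing R] [IsDomain R]
    [IsNoetherianRing R] {p : R} (hp : ¬IsUnit p) :
    ⨅ n : ℕ, Ideal.span {p ^ (n + 1)} = ⊥ := by
  have hKrull : ⨅ n : ℕ, Ideal.span {p} ^ n = ⊥ :=
    Ideal.iInf_pow_eq_bot_of_isDomain _ (Ideal.span_singleton_ne_top hp)
  refine eq_bot_iff.mpr (le_trans (le_iInf fun n => ?_) hKrull.le)
  rw [Ideal.span_singleton_pow]
  exact (iInf_le _ n).trans (Ideal.span_singleton_le_span_singleton.mpr (pow_dvd_pow p n.le_succ))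

theorem DirectSum.exists_pow_smul_eq_zero {R ι : Type*} [CommSemiring R] {M : ι → Type*}
    [∀ i, AddCommMonoid (M i)] [∀ i, Module R (M i)] {p : R}
    (hM : ∀ i (y : M i), ∃ k : ℕ, p ^ k • y = 0) (x : ⨁ i, M i) :
    ∃ k : ℕ, p ^ k • x = 0 := by
  classical
  induction x using DirectSum.induction_on with
  | zero => exact ⟨0, smul_zero _⟩
  | of i y =>
    obtain ⟨k, hk⟩ := hM i y
    exact ⟨k, by rw [← DirectSum.of_smul, hk, map_zero]⟩
  | add x y hx hy =>
    obtain ⟨k, hk⟩ := hx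
    obtain ⟨l, hl⟩ := hy
    refine ⟨k + l, ?_⟩
    rw [smul_add, pow_add, mul_smul, mul_smul, smul_comm (p ^ k) (p ^ l) x, hk, hl, smul_zero,
      smul_zero, add_zero]

theorem exists_pow_smul_eq_zero_directSum_quotient_pow {R : Type*} [CommRing R] (p : R)
    (x : ⨁ n : ℕ, R ⧸ Ideal.span {p ^ (n + 1)}) : ∃ k : ℕ, p ^ k • x = 0 :=
  DirectSum.exists_pow_smul_eq_zero (fun n y => ⟨n + 1, Module.mem_annihilator.mp
    (by rw [Ideal.annihilator_quotient]; exact Ideal.mem_span_singleton_self _) y⟩) x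

theorem TensorProduct.subsingleton_of_isCoprime_of_pow_smul_eq_zero {R M N : Type*}
    [CommSemiring R] [AddCommMonoid M] [AddCommMonoid N] [Module R M] [Module R N] {p q : R}
    (hpq : IsCoprime p q) (hM : ∀ m : M, ∃ k : ℕ, p ^ k • m = 0)
    (hN : ∀ n : N, ∃ k : ℕ, q ^ k • n = 0) : Subsingleton (M ⊗[R] N) := by
  refine subsingleton_of_forall_eq 0 fun x => ?_
  induction x using TensorProduct.induction_on with
  | zero => rfl
  | tmul m n =>
    obtain ⟨k, hm⟩ := hM m
    obtain ⟨l, hn⟩ := hN n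
    obtain ⟨u, v, huv⟩ := hpq.pow (m := k) (n := l)
    calc m ⊗ₜ[R] n = (u * p ^ k + v * q ^ l) • (m ⊗ₜ[R] n) := by rw [huv, one_smul]
      _ = u • ((p ^ k • m) ⊗ₜ[R] n) + v • (m ⊗ₜ[R] (q ^ l • n)) := by
        rw [add_smul, mul_smul, mul_smul, smul_tmul', tmul_smul]
      _ = 0 := by rw [hm, hn, zero_tmul, tmul_zero, smul_zero, smul_zero, add_zero]
  | add x y hx hy => rw [hx, hy, add_zero]

/-- Let `C` be a commutative principal ideal domain having two non-associate prime
elements `p₀` and `p₁` (i.e. generating distinct prime ideals).  Then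
`M = ⨁_{n ≥ 1} C/(p₀ⁿ)` and `N = ⨁_{n ≥ 1} C/(p₁ⁿ)` are faithful `C`-modules,
but `M ⊗[C] N = 0`. -/
theorem counterexample_prime_powers
    (C : Type*) [CommRing C] [IsDomain C] [IsPrincipalIdealRing C]
    (p₀ p₁ : C) (hp₀ : Prime p₀) (hp₁ : Prime p₁)
    (hne : Ideal.span {p₀} ≠ Ideal.span {p₁}) :
    FaithfulSMul C (⨁ n : ℕ, C ⧸ Ideal.span {p₀ ^ (n + 1)}) ∧
    FaithfulSMul C (⨁ n : ℕ, C ⧸ Ideal.span {p₁ ^ (n + 1)}) ∧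
    Subsingleton ((⨁ n : ℕ, C ⧸ Ideal.span {p₀ ^ (n + 1)}) ⊗[C]
      (⨁ n : ℕ, C ⧸ Ideal.span {p₁ ^ (n + 1)})) := by
  have hcop : IsCoprime p₀ p₁ := hp₀.coprime_iff_not_dvd.mpr fun hdvd =>
    hne (Ideal.span_singleton_eq_span_singleton.mpr
      (hp₀.irreducible.associated_of_dvd hp₁.irreducible hdvd))
  exact ⟨faithfulSMul_directSum_quotient_of_iInf_eq_bot _
      (iInf_span_singleton_pow_succ_eq_bot hp₀.not_isUnit),
    faithfulSMul_directSum_quotient_of_iInf_eq_bot _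
      (iInf_span_singleton_pow_succ_eq_bot hp₁.not_isUnit),
    TensorProduct.subsingleton_of_isCoprime_of_pow_smul_eq_zero hcop
      (exists_pow_smul_eq_zero_directSum_quotient_pow p₀)
      (exists_pow_smul_eq_zero_directSum_quotient_pow p₁)⟩
end

section
/- Let k be a commutative ring. Suppose given k-modules A, M_0, M_1, B, N_0, N_1, an injective k-linear map α: A → Hom_k(M_0, M_1) and an injective k-linear map β: B → Hom_k(N_0, N_1). Suppose moreover that elements of M_1 can be separated by k-module homomorphisms M_1 → k (for every nonzero u ∈ M_1 there is a k-linear φ: M_1 → k with φ(u) ≠ 0), and that every finite subset of B is contained in a free k-submodule of B. Then the induced k-linear map A ⊗_k B → Hom_k(M_0 ⊗_k N_0, M_1 ⊗_k N_1), under which Σ_i a_i ⊗ b_i sends u ⊗ v to Σ_i α(a_i)(u) ⊗ β(b_i)(v), is injective. -/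
/-!
If `x ∈ A ⊗ B` acts as zero, then for every `φ : M₁ → k` and `u ∈ M₀`, contracting the
`A`-factor of `x` against the functional `a ↦ φ (α a u)` gives an element of `B` whose image
under `β` is zero, so it vanishes. These functionals separate the points of `A`. Moreover `x`
comes from `A ⊗ S` for a free submodule `S ≤ B`; writing it as `∑ aᵢ ⊗ eᵢ` in a basis `(eᵢ)`
of `S`, the contractions are `∑ φ (α aᵢ u) • eᵢ = 0`, so every `aᵢ` is killed by all the
separating functionals and `x = 0`.
-/

open TensorProduct

namespace TensorProduct

variable {k A F B : Type*} [CommRing k] [AddCommGroup A] [Module k A]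
  [AddCommGroup F] [Module k F] [AddCommGroup B] [Module k B]

theorem apply_rid_lTensor_eq_apply_lid_rTensor (ℓ : Module.Dual k A) (g : Module.Dual k F)
    (y : A ⊗[k] F) :
    ℓ (TensorProduct.rid k A (g.lTensor A y)) = g (TensorProduct.lid k F (ℓ.rTensor F y)) := by
  induction y <;> simp_all [mul_comm]

theorem lid_rTensor_lTensor (ℓ : Module.Dual k A) (g : F →ₗ[k] B) (y : A ⊗[k] F) :
    TensorProduct.lid k B (ℓ.rTensor B (g.lTensor A y)) =
      g (TensorProduct.lid k F (ℓ.rTensor F y)) := by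
  induction y <;> simp_all

theorem eq_zero_of_forall_lid_rTensor_eq_zero_of_free [Module.Free k F] {J : Type*}
    (ℓ : J → Module.Dual k A) (hℓ : ∀ a : A, a ≠ 0 → ∃ j, ℓ j a ≠ 0) (y : A ⊗[k] F)
    (hy : ∀ j, TensorProduct.lid k F ((ℓ j).rTensor F y) = 0) : y = 0 := by
  classical
  let b := Module.Free.chooseBasis k F
  apply (equivFinsuppOfBasisRight b).injective
  ext i
  rw [equivFinsuppOfBasisRight_apply, map_zero, Finsupp.zero_apply]
  by_contra hi
  obtain ⟨j, hj⟩ := hℓ _ hi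
  exact hj (by rw [apply_rid_lTensor_eq_apply_lid_rTensor, hy, map_zero])

theorem exists_free_submodule_lTensor_subtype_eq
    (hfree : ∀ s : Finset B, ∃ S : Submodule k B, (s : Set B) ⊆ S ∧ Module.Free k S)
    (x : A ⊗[k] B) :
    ∃ (S : Submodule k B) (_ : Module.Free k S) (y : A ⊗[k] S), S.subtype.lTensor A y = x := by
  obtain ⟨N, hN, hx⟩ := exists_finite_submodule_right_of_setFinite {x} (Set.finite_singleton x)
  obtain ⟨s, rfl⟩ := Module.Finite.iff_fg.mp hN
  obtain ⟨S, hsS, hS⟩ := hfree s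
  obtain ⟨y, rfl⟩ := hx rfl
  refine ⟨S, hS, (Submodule.inclusion (Submodule.span_le.mpr hsS)).lTensor A y, ?_⟩
  rw [← LinearMap.comp_apply, ← LinearMap.lTensor_comp]
  rfl

theorem eq_zero_of_forall_lid_rTensor_eq_zero
    (hfree : ∀ s : Finset B, ∃ S : Submodule k B, (s : Set B) ⊆ S ∧ Module.Free k S)
    {J : Type*} (ℓ : J → Module.Dual k A) (hℓ : ∀ a : A, a ≠ 0 → ∃ j, ℓ j a ≠ 0)
    (x : A ⊗[k] B) (hx : ∀ j, TensorProduct.lid k B ((ℓ j).rTensor B x) = 0) : x = 0 := by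
  obtain ⟨S, hS, y, rfl⟩ := exists_free_submodule_lTensor_subtype_eq hfree x
  rw [eq_zero_of_forall_lid_rTensor_eq_zero_of_free ℓ hℓ y fun j =>
    S.subtype_injective (by rw [← lid_rTensor_lTensor, hx, map_zero]), map_zero]

theorem lid_rTensor_homTensorHomMap_map {M₀ M₁ N₀ N₁ : Type*}
    [AddCommGroup M₀] [Module k M₀] [AddCommGroup M₁] [Module k M₁]
    [AddCommGroup N₀] [Module k N₀] [AddCommGroup N₁] [Module k N₁]
    (α : A →ₗ[k] (M₀ →ₗ[k] M₁)) (β : B →ₗ[k] (N₀ →ₗ[k] N₁)) (φ : Module.Dual k M₁) (u : M₀)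
    (v : N₀) (x : A ⊗[k] B) :
    TensorProduct.lid k N₁
        (φ.rTensor N₁ (homTensorHomMap (RingHom.id k) M₀ N₀ M₁ N₁ (map α β x) (u ⊗ₜ v))) =
      β (TensorProduct.lid k B ((φ ∘ₗ α.flip u).rTensor B x)) v := by
  induction x <;> simp_all

end TensorProduct

/-- **Corollary (faithful actions, commutative base ring).**
Let `k` be a commutative ring, and suppose given faithful actions (injective `k`-linear
maps) `α : A →ₗ[k] Hom_k(M₀, M₁)` and `β : B →ₗ[k] Hom_k(N₀, N₁)`.  Suppose moreover that
elements of `M₁` are separated by `k`-module homomorphisms `M₁ → k`, and that every finite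
subset of `B` is contained in a free `k`-submodule of `B`.  Then the induced action
`(homTensorHomMap k M₀ N₀ M₁ N₁) ∘ₗ (map α β)` of `A ⊗[k] B` on
`(M₀ ⊗[k] N₀, M₁ ⊗[k] N₁)` is injective. -/
theorem faithful_action_tensor_of_commRing
    (k : Type*) [CommRing k] (A B M₀ M₁ N₀ N₁ : Type*)
    [AddCommGroup A] [Module k A] [AddCommGroup B] [Module k B]
    [AddCommGroup M₀] [Module k M₀] [AddCommGroup M₁] [Module k M₁]
    [AddCommGroup N₀] [Module k N₀] [AddCommGroup N₁] [Module k N₁]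
    (α : A →ₗ[k] (M₀ →ₗ[k] M₁)) (β : B →ₗ[k] (N₀ →ₗ[k] N₁))
    (hα : Function.Injective α) (hβ : Function.Injective β)
    (hsep : ∀ u : M₁, u ≠ 0 → ∃ φ : M₁ →ₗ[k] k, φ u ≠ 0)
    (hfree : ∀ s : Finset B, ∃ S : Submodule k B, (s : Set B) ⊆ S ∧ Module.Free k S) :
    Function.Injective
      ((TensorProduct.homTensorHomMap (RingHom.id k) M₀ N₀ M₁ N₁).comp (TensorProduct.map α β)) := by
  have hℓ (a : A) (ha : a ≠ 0) : ∃ p : Module.Dual k M₁ × M₀, (p.1 ∘ₗ α.flip p.2) a ≠ 0 := by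
    obtain ⟨u, hu⟩ : ∃ u, α a u ≠ 0 := by
      by_contra! h
      exact ha (hα (by ext u; simp [h]))
    obtain ⟨φ, hφ⟩ := hsep _ hu
    exact ⟨(φ, u), hφ⟩
  refine (injective_iff_map_eq_zero _).mpr fun x hx => ?_
  refine eq_zero_of_forall_lid_rTensor_eq_zero hfree _ hℓ x fun ⟨φ, u⟩ => hβ ?_
  ext v
  rw [LinearMap.comp_apply] at hx
  rw [← lid_rTensor_homTensorHomMap_map, hx]
  simp
end

section
/- Let k be a field, M and N k-vector spaces, and X and Y arbitrary sets. Then the natural k-linear map M^X ⊗_k N^Y → (M ⊗_k N)^{X×Y}, sending (u_x)_{x∈X} ⊗ (v_y)_{y∈Y} to the family (u_x ⊗ v_y)_{(x,y)∈X×Y}, is injective. -/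
open TensorProduct

/-- The natural `k`-linear map `M^X ⊗[k] N^Y → (M ⊗[k] N)^(X × Y)`, determined on
decomposable tensors by sending `(u_x)_{x ∈ X} ⊗ (v_y)_{y ∈ Y}` to the family
`((x, y) ↦ u_x ⊗ v_y)`. -/
noncomputable def powTensorPow (k M N X Y : Type*) [CommRing k]
    [AddCommGroup M] [Module k M] [AddCommGroup N] [Module k N] :
    ((X → M) ⊗[k] (Y → N)) →ₗ[k] (X × Y → M ⊗[k] N) :=
  TensorProduct.lift
    (LinearMap.mk₂ k (fun u v xy => u xy.1 ⊗ₜ[k] v xy.2)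
      (fun u u' v => by funext xy; simp [TensorProduct.add_tmul])
      (fun c u v => by funext xy; simp [TensorProduct.smul_tmul'])
      (fun u v v' => by funext xy; simp [TensorProduct.tmul_add])
      (fun c u v => by funext xy; simp [TensorProduct.tmul_smul]))

/-!
Over a field every module is free, and for a free module `M` the comparison map
`M ⊗ Πᵢ Pᵢ → Πᵢ (M ⊗ Pᵢ)` is injective: the coordinates, in a basis of `M`, of the
components of the image of `t` are the components of the coordinates of `t`.
The map of the theorem is this comparison map applied twice, first to the factor `Y → N`
tensored with `X → M` and then, for each `x`, to `M` tensored with `Y → N`.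
-/

namespace TensorProduct

theorem piRightHom_injective_of_free (R M : Type*) [CommSemiring R] [AddCommMonoid M]
    [Module R M] [Module.Free R M] {ι : Type*} (P : ι → Type*) [∀ i, AddCommMonoid (P i)]
    [∀ i, Module R (P i)] :
    Function.Injective (piRightHom R R M P) := by
  classical
  let b := Module.Free.chooseBasis R M
  have coeff : ∀ (t : M ⊗[R] (∀ i, P i)) j i, equivFinsuppOfBasisLeft b t j i =
      equivFinsuppOfBasisLeft b (piRightHom R R M P t i) j := by
    intro t j i
    induction t using TensorProduct.induction_on <;> simp_all
  intro s t hst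
  apply (equivFinsuppOfBasisLeft b).injective
  ext j i
  rw [coeff, coeff, hst]

end TensorProduct

theorem powTensorPow_apply_eq_piRightHom (k M N X Y : Type*) [CommRing k]
    [AddCommGroup M] [Module k M] [AddCommGroup N] [Module k N]
    (t : (X → M) ⊗[k] (Y → N)) (x : X) (y : Y) :
    powTensorPow k M N X Y t (x, y) =
      piRightHom k k M (fun _ : Y => N)
        (TensorProduct.comm k (Y → N) M
          (piRightHom k k (Y → N) (fun _ : X => M) (TensorProduct.comm k (X → M) (Y → N) t) x))
        y := by
  induction t using TensorProduct.induction_on with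
  | zero => simp
  | tmul u v => simp [powTensorPow]
  | add s t hs ht => simp only [map_add, Pi.add_apply, hs, ht]

/-- Let `k` be a field, `M` and `N` `k`-vector spaces, and `X`, `Y` arbitrary sets.
Then the natural `k`-linear map `M^X ⊗[k] N^Y → (M ⊗[k] N)^(X × Y)` is injective. -/
theorem powTensorPow_injective
    (k M N X Y : Type*) [Field k]
    [AddCommGroup M] [Module k M] [AddCommGroup N] [Module k N] :
    Function.Injective (powTensorPow k M N X Y) := by
  intro s t hst
  apply (TensorProduct.comm k (X → M) (Y → N)).injective
  apply piRightHom_injective_of_free k (Y → N) (fun _ : X => M)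
  funext x
  apply (TensorProduct.comm k (Y → N) M).injective
  apply piRightHom_injective_of_free k M (fun _ : Y => N)
  funext y
  simpa only [powTensorPow_apply_eq_piRightHom] using congrFun hst (x, y)
end
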